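/- Let T > 0 and let q = (q^(1), q^(2)) : ℝ → ℝ² be a continuously differentiable T-periodic map satisfying, for all t ∈ ℝ, q^(1)(t) = -q^(1)(t + T/2) and q^(2)(t) = -q^(2)(t + T/4). Then for every t ∈ ℝ, the Euclidean norm of q(t) satisfies |q(t)| ≤ (√(3T)/4) · (∫₀ᵀ |q̇(s)|² ds)^{1/2}. -/

import Mathlib

/-!
An `S`-antiperiodic `C¹` function satisfies `-2 f(t) = ∫ₜ^{t+S} f'`, so Cauchy–Schwarz gives
`f(t)² ≤ (S/4) ∫ₜ^{t+S} f'² ≤ (S/4) ∫₀^T f'²` when `S ≤ T` and `f'` is `T`-periodic. Applied with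
`S = T/2` and `S = T/4` to the two components of `q`, this yields
`|q(t)|² ≤ (T/8) ∫₀^T q̇₁² + (T/16) ∫₀^T q̇₂² ≤ (3T/16) ∫₀^T |q̇|²`.
-/

open intervalIntegral MeasureTheory

theorem sq_intervalIntegral_le_mul_intervalIntegral_sq {g : ℝ → ℝ} {a b : ℝ} (hab : a < b)
    (hg : IntervalIntegrable g volume a b)
    (hg2 : IntervalIntegrable (fun x ↦ g x ^ 2) volume a b) :
    (∫ x in a..b, g x) ^ 2 ≤ (b - a) * ∫ x in a..b, g x ^ 2 := by
  have hba : 0 < b - a := sub_pos.2 hab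
  have jensen : (⨍ x in a..b, g x) ^ 2 ≤ ⨍ x in a..b, g x ^ 2 :=
    even_two.convexOn_pow.map_set_average_le (continuous_pow 2).continuousOn isClosed_univ
      (by simp [Real.volume_uIoc, hba.ne']) (by simp [Real.volume_uIoc]) (by simp) hg.def' hg2.def'
  rw [interval_average_eq_div, interval_average_eq_div, div_pow,
    div_le_div_iff₀ (by positivity) hba] at jensen
  nlinarith

theorem Function.Periodic.deriv {f : ℝ → ℝ} {c : ℝ} (hf : Function.Periodic f c) :
    Function.Periodic (deriv f) c := fun x ↦ by
  rw [← deriv_comp_add_const, hf.funext]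

theorem Function.Periodic.intervalIntegral_le_of_nonneg {g : ℝ → ℝ} {T S : ℝ}
    (hg : Function.Periodic g T) (hg_nonneg : 0 ≤ g)
    (hg_int : ∀ a b, IntervalIntegrable g volume a b) (hST : S ≤ T) (u : ℝ) :
    ∫ s in u..u + S, g s ≤ ∫ s in (0 : ℝ)..T, g s := by
  rw [← zero_add T, ← hg.intervalIntegral_add_eq u 0,
    ← integral_add_adjacent_intervals (hg_int u (u + S)) (hg_int (u + S) (u + T))]
  have : 0 ≤ ∫ s in u + S..u + T, g s := integral_nonneg (by linarith) fun s _ ↦ hg_nonneg s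
  linarith

theorem Function.Antiperiodic.sq_le_mul_intervalIntegral_deriv_sq {f : ℝ → ℝ} {c : ℝ}
    (hf : Function.Antiperiodic f c) (hc : 0 < c) (hf_diff : Differentiable ℝ f)
    (hf' : Continuous (deriv f)) (t : ℝ) :
    f t ^ 2 ≤ c / 4 * ∫ s in t..t + c, deriv f s ^ 2 := by
  have ftc : ∫ s in t..t + c, deriv f s = -2 * f t := by
    rw [integral_deriv_eq_sub (fun x _ ↦ hf_diff x) (hf'.intervalIntegrable _ _), hf t]
    ring
  have cauchy_schwarz := sq_intervalIntegral_le_mul_intervalIntegral_sq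
    (lt_add_of_pos_right t hc) (hf'.intervalIntegrable _ _) ((hf'.pow 2).intervalIntegrable _ _)
  rw [ftc, add_sub_cancel_left] at cauchy_schwarz
  linarith

theorem Function.Antiperiodic.sq_le_mul_intervalIntegral_deriv_sq_of_periodic {f : ℝ → ℝ}
    {c T : ℝ} (hf : Function.Antiperiodic f c) (hper : Function.Periodic f T) (hc : 0 < c)
    (hcT : c ≤ T) (hf_C1 : ContDiff ℝ 1 f) (t : ℝ) :
    f t ^ 2 ≤ c / 4 * ∫ s in (0 : ℝ)..T, deriv f s ^ 2 := by
  have hf' : Continuous (deriv f) := hf_C1.continuous_deriv le_rfl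
  calc f t ^ 2 ≤ c / 4 * ∫ s in t..t + c, deriv f s ^ 2 :=
        hf.sq_le_mul_intervalIntegral_deriv_sq hc (hf_C1.differentiable one_ne_zero) hf' t
    _ ≤ c / 4 * ∫ s in (0 : ℝ)..T, deriv f s ^ 2 := by
        gcongr
        exact (hper.deriv.comp (· ^ 2)).intervalIntegral_le_of_nonneg (fun s ↦ sq_nonneg _)
          (fun a b ↦ (hf'.pow 2).intervalIntegrable a b) hcT t

namespace EuclideanSpace

variable {ι : Type*} [Fintype ι]

theorem deriv_apply {q : ℝ → EuclideanSpace ℝ ι} {s : ℝ} (hq : DifferentiableAt ℝ q s) (i : ι) :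
    deriv (fun t ↦ q t i) s = deriv q s i :=
  (((proj i).hasFDerivAt.comp_hasDerivAt s hq.hasDerivAt :) :
    HasDerivAt (fun t ↦ q t i) (deriv q s i) s).deriv

theorem sq_apply_le_mul_intervalIntegral_deriv_sq {q : ℝ → EuclideanSpace ℝ ι} {c T : ℝ}
    (i : ι) (hq : ContDiff ℝ 1 q) (hper : Function.Periodic q T)
    (hanti : Function.Antiperiodic (fun t ↦ q t i) c) (hc : 0 < c) (hcT : c ≤ T) (t : ℝ) :
    q t i ^ 2 ≤ c / 4 * ∫ s in (0 : ℝ)..T, deriv q s i ^ 2 := by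
  have hqi : ContDiff ℝ 1 (fun t ↦ q t i) := ((proj i).contDiff.comp hq :)
  simpa only [deriv_apply (hq.differentiable one_ne_zero _)] using
    hanti.sq_le_mul_intervalIntegral_deriv_sq_of_periodic (fun t ↦ by simp [hper t]) hc hcT hqi t

theorem norm_sq_fin_two (x : EuclideanSpace ℝ (Fin 2)) : ‖x‖ ^ 2 = x 0 ^ 2 + x 1 ^ 2 := by
  rw [real_norm_sq_eq, Fin.sum_univ_two]

end EuclideanSpace

/-- Estimate of `|q(t)|` for a `T`-periodic `C¹` loop in `ℝ²` (Double-Eight case) whose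
first component is `T/2`-antiperiodic and second component is `T/4`-antiperiodic:
`|q(t)| ≤ (√(3T)/4) (∫₀ᵀ |q̇|²)^{1/2}`. -/
theorem norm_bound_double_eight (T : ℝ) (hT : 0 < T)
    (q : ℝ → EuclideanSpace ℝ (Fin 2))
    (hq : ContDiff ℝ 1 q)
    (hper : ∀ t : ℝ, q (t + T) = q t)
    (h1 : ∀ t : ℝ, q t 0 = -q (t + T / 2) 0)
    (h2 : ∀ t : ℝ, q t 1 = -q (t + T / 4) 1) :
    ∀ t : ℝ, ‖q t‖ ≤ Real.sqrt (3 * T) / 4 *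
      Real.sqrt (∫ s in (0 : ℝ)..T, ‖deriv q s‖ ^ 2) := by
  intro t
  have hq' : Continuous (deriv q) := hq.continuous_deriv le_rfl
  have hint : ∀ i : Fin 2, IntervalIntegrable (fun s ↦ deriv q s i ^ 2) volume 0 T :=
    fun i ↦ (((EuclideanSpace.proj i).continuous.comp hq').pow 2).intervalIntegrable 0 T
  have energy_split : ∫ s in (0 : ℝ)..T, ‖deriv q s‖ ^ 2 =
      (∫ s in (0 : ℝ)..T, deriv q s 0 ^ 2) + ∫ s in (0 : ℝ)..T, deriv q s 1 ^ 2 := by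
    simp only [EuclideanSpace.norm_sq_fin_two, integral_add (hint 0) (hint 1)]
  have hI : ∀ i : Fin 2, 0 ≤ ∫ s in (0 : ℝ)..T, deriv q s i ^ 2 :=
    fun i ↦ integral_nonneg hT.le fun s _ ↦ sq_nonneg _
  have bound0 := EuclideanSpace.sq_apply_le_mul_intervalIntegral_deriv_sq 0 hq hper
    (fun s ↦ by beta_reduce; rw [h1 s, neg_neg]) (half_pos hT) (half_le_self hT.le) t
  have bound1 := EuclideanSpace.sq_apply_le_mul_intervalIntegral_deriv_sq 1 hq hper
    (fun s ↦ by beta_reduce; rw [h2 s, neg_neg]) (by linarith) (by linarith) t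
  apply le_of_pow_le_pow_left₀ two_ne_zero (by positivity)
  rw [mul_pow, div_pow, Real.sq_sqrt (by positivity),
    Real.sq_sqrt (by rw [energy_split]; linarith [hI 0, hI 1]),
    EuclideanSpace.norm_sq_fin_two, energy_split]
  nlinarith [hI 0, hI 1]
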